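/- arXiv:1007.4935 — 7 statements merged into one kernel-verified Lean document; each statement's English description precedes it below -/
import Mathlib

section
/- Let B₁ = ⟨r₀, …, r_{k−1}⟩ be a finite mixed radix base and let B₂ be obtained from B₁ by replacing two consecutive elements r_p, r_{p+1} (with p < k−1) by their product r_p·r_{p+1}. Then for every natural number v, the sum of the digits of v in base B₂ is greater than or equal to the sum of the digits of v in base B₁. -/
/-- The weight of digit position `i` in mixed radix base `B`: product of the first `i` radices. -/
def weight (B : List ℕ) (i : ℕ) : ℕ := (B.take i).prod

/-- The `i`-th digit of `v` in mixed radix base `B` (the most significant digit, at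
position `B.length`, is `v / B.prod` and is unbounded). -/
def digit (B : List ℕ) (v i : ℕ) : ℕ :=
  if i < B.length then (v / weight B i) % B.getD i 1 else v / B.prod

/-- The sum of the digits of `v` in base `B`. -/
def digitSum (B : List ℕ) (v : ℕ) : ℕ :=
  ∑ i ∈ Finset.range (B.length + 1), digit B v i

/-- The sum of digits of all elements of the multiset `S` in base `B`. -/
def sumDigits (S : Multiset ℕ) (B : List ℕ) : ℕ :=
  (S.map (digitSum B)).sum

/-! Splitting off the radix `r * s` of `B₂` into the radices `r, s` of `B₁` replaces the digit
`v % (r * s) = v % r + r * (v / r % s)` by `v % r + v / r % s`; all other digits agree. -/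

lemma digit_cons (a : ℕ) (B : List ℕ) (v i : ℕ) :
    digit (a :: B) v (i + 1) = digit B (v / a) i := by
  simp only [digit, List.length_cons, Nat.add_lt_add_iff_right, weight, List.take_succ_cons,
    List.prod_cons, List.getD_cons_succ, Nat.div_div_eq_div_mul]

lemma digitSum_cons (a : ℕ) (B : List ℕ) (v : ℕ) :
    digitSum (a :: B) v = v % a + digitSum B (v / a) := by
  have digit_zero : digit (a :: B) v 0 = v % a := by simp [digit, weight]
  simp only [digitSum, List.length_cons, Finset.sum_range_succ', digit_cons, digit_zero]
  ring

lemma mod_add_div_mod_le_mod_mul (v r s : ℕ) : v % r + v / r % s ≤ v % (r * s) := by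
  rw [Nat.mod_mul]
  rcases r.eq_zero_or_pos with rfl | hr
  · simp
  · exact Nat.add_le_add_left (Nat.le_mul_of_pos_left _ hr) _

lemma digitSum_cons_cons_le (r s : ℕ) (Q : List ℕ) (v : ℕ) :
    digitSum (r :: s :: Q) v ≤ digitSum (r * s :: Q) v := by
  simp only [digitSum_cons, Nat.div_div_eq_div_mul, ← add_assoc]
  exact Nat.add_le_add_right (mod_add_div_mod_le_mod_mul v r s) _

lemma digitSum_append_le_append {B C : List ℕ} (h : ∀ w, digitSum B w ≤ digitSum C w)
    (P : List ℕ) (v : ℕ) : digitSum (P ++ B) v ≤ digitSum (P ++ C) v := by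
  induction P generalizing v with
  | nil => exact h v
  | cons a P ih =>
    simp only [List.cons_append, digitSum_cons]
    exact Nat.add_le_add_left (ih (v / a)) _

theorem stmt3_general (P Q : List ℕ) (r s : ℕ) (v : ℕ) :
    digitSum (P ++ r :: s :: Q) v ≤ digitSum (P ++ (r * s) :: Q) v :=
  digitSum_append_le_append (digitSum_cons_cons_le r s Q) P v

theorem stmt3 (P Q : List ℕ) (r s : ℕ) (hr : 2 ≤ r) (hs : 2 ≤ s)
    (hP : ∀ x ∈ P, 2 ≤ x) (hQ : ∀ x ∈ Q, 2 ≤ x) (v : ℕ) :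
    digitSum (P ++ r :: s :: Q) v ≤ digitSum (P ++ (r * s) :: Q) v :=
  stmt3_general P Q r s v
end

section
/- Let B₁, B₂ be as in the base-factoring setting: B₂ obtained from B₁ = ⟨r₀,…,r_{k−1}⟩ by merging positions p and p+1 into r_p·r_{p+1}. Then for every natural number v, the digit of v in B₂ at position p equals d_p + d_{p+1}·r_p, where d_p, d_{p+1} are the digits of v in B₁ at positions p and p+1. -/
/-! Both bases give position `p` the same weight `w`, the product of the radices before it, so
the claim is the identity `n % (r * s) = n % r + r * (n / r % s)` for `n = v / w`. -/

theorem weight_append_length (P L : List ℕ) : weight (P ++ L) P.length = P.prod := by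
  rw [weight, List.take_left]

theorem digit_append_cons (P L : List ℕ) (a v : ℕ) :
    digit (P ++ a :: L) v P.length = v / P.prod % a := by
  have hlt : P.length < (P ++ a :: L).length := by simp
  have hradix : (P ++ a :: L).getD P.length 1 = a := by simp
  rw [digit, if_pos hlt, weight_append_length, hradix]

theorem digit_append_cons_cons_succ (P L : List ℕ) (a b v : ℕ) :
    digit (P ++ a :: b :: L) v (P.length + 1) = v / P.prod / a % b := by
  have hsplit : P ++ a :: b :: L = (P ++ [a]) ++ b :: L := by simp
  have hlen : P.length + 1 = (P ++ [a]).length := by simp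
  rw [hsplit, hlen, digit_append_cons, List.prod_append, List.prod_singleton,
    Nat.div_div_eq_div_mul]

theorem stmt4_general (P Q : List ℕ) (r s : ℕ) (v : ℕ) :
    digit (P ++ (r * s) :: Q) v P.length =
      digit (P ++ r :: s :: Q) v P.length +
        digit (P ++ r :: s :: Q) v (P.length + 1) * r := by
  rw [digit_append_cons, digit_append_cons, digit_append_cons_cons_succ, Nat.mod_mul, mul_comm r]

theorem stmt4 (P Q : List ℕ) (r s : ℕ) (hr : 2 ≤ r) (hs : 2 ≤ s)
    (hP : ∀ x ∈ P, 2 ≤ x) (hQ : ∀ x ∈ Q, 2 ≤ x) (v : ℕ) :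
    digit (P ++ (r * s) :: Q) v P.length =
      digit (P ++ r :: s :: Q) v P.length +
        digit (P ++ r :: s :: Q) v (P.length + 1) * r :=
  stmt4_general P Q r s v
end

section
/- Let S be a finite non-empty multiset of natural numbers and let B be a finite mixed radix base with ∏B > max(S). Let B' be the base obtained by removing the last element of B. Then the sum over all v in S of the sum of digits of v in base B equals the corresponding sum for B'. Consequently, S has an optimal base (minimizing sum of digits) among bases B with ∏B ≤ max(S). -/
lemma digit_append_of_lt_length (B C : List ℕ) (v : ℕ) {i : ℕ} (hi : i < B.length) :
    digit (B ++ C) v i = digit B v i := by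
  have hi' : i < (B ++ C).length := by rw [List.length_append]; omega
  simp only [digit, weight, if_pos hi, if_pos hi', List.take_append_of_le_length hi.le,
    List.getD_append _ _ _ _ hi]

lemma digitSum_append_singleton (B : List ℕ) (r v : ℕ) :
    digitSum (B ++ [r]) v =
      ∑ i ∈ Finset.range B.length, digit B v i + (v / B.prod) % r + v / (B.prod * r) := by
  have h_mid : digit (B ++ [r]) v B.length = (v / B.prod) % r := by
    simp [digit, weight]
  have h_top : digit (B ++ [r]) v (B.length + 1) = v / (B.prod * r) := by
    simp [digit]
  rw [digitSum, List.length_append, List.length_singleton, Finset.sum_range_succ,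
    Finset.sum_range_succ, h_mid, h_top]
  congr 2
  exact Finset.sum_congr rfl fun i hi =>
    digit_append_of_lt_length B [r] v (Finset.mem_range.mp hi)

lemma digitSum_append_singleton_of_lt {B : List ℕ} {r v : ℕ} (hv : v < (B ++ [r]).prod) :
    digitSum (B ++ [r]) v = digitSum B v := by
  rw [List.prod_append, List.prod_singleton] at hv
  have hB : 0 < B.prod := Nat.pos_of_ne_zero fun h => by simp [h] at hv
  have hdiv : v / B.prod < r := (Nat.div_lt_iff_lt_mul hB).mpr (by rwa [Nat.mul_comm])
  rw [digitSum_append_singleton, Nat.mod_eq_of_lt hdiv, Nat.div_eq_of_lt hv, digitSum,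
    Finset.sum_range_succ]
  simp [digit]

lemma sumDigits_append_singleton_of_lt {S : Multiset ℕ} {B : List ℕ} {r : ℕ}
    (hS : ∀ v ∈ S, v < (B ++ [r]).prod) :
    sumDigits S (B ++ [r]) = sumDigits S B :=
  congrArg Multiset.sum <| Multiset.map_congr rfl fun v hv =>
    digitSum_append_singleton_of_lt (hS v hv)

lemma exists_prefix_prod_le_sumDigits_eq {S : Multiset ℕ} {m : ℕ} (hm : 0 < m)
    (hmax : ∀ v ∈ S, v ≤ m) (B : List ℕ) :
    ∃ B₀, B₀ <+: B ∧ B₀.prod ≤ m ∧ sumDigits S B₀ = sumDigits S B := by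
  induction B using List.reverseRecOn with
  | nil => exact ⟨[], List.prefix_rfl, hm, rfl⟩
  | append_singleton B r ih =>
    by_cases hle : (B ++ [r]).prod ≤ m
    · exact ⟨B ++ [r], List.prefix_rfl, hle, rfl⟩
    · obtain ⟨B₀, hpre, hprod, hsum⟩ := ih
      refine ⟨B₀, hpre.trans (List.prefix_append B [r]), hprod, hsum.trans ?_⟩
      exact (sumDigits_append_singleton_of_lt fun v hv =>
        (hmax v hv).trans_lt (not_le.mp hle)).symm

theorem stmt5_general (S : Multiset ℕ) (m : ℕ) (hm : 0 < m)
    (hmax : ∀ x ∈ S, x ≤ m)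
    (B' : List ℕ) (r : ℕ)
    (hprod : m < (B' ++ [r]).prod) :
    sumDigits S (B' ++ [r]) = sumDigits S B' ∧
    ∃ B₀ : List ℕ, (∀ x ∈ B₀, 2 ≤ x) ∧ B₀.prod ≤ m ∧
      ∀ B₁ : List ℕ, (∀ x ∈ B₁, 2 ≤ x) → sumDigits S B₀ ≤ sumDigits S B₁ := by
  refine ⟨sumDigits_append_singleton_of_lt fun v hv => (hmax v hv).trans_lt hprod, ?_⟩
  let small : Set (List ℕ) := {B | (∀ x ∈ B, 2 ≤ x) ∧ B.prod ≤ m}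
  have h_nil : [] ∈ small := ⟨by simp, hm⟩
  obtain ⟨hB₀, hB₀_prod⟩ := Function.argminOn_mem (sumDigits S) small ⟨_, h_nil⟩
  refine ⟨_, hB₀, hB₀_prod, fun B₁ hB₁ => ?_⟩
  obtain ⟨B₂, hpre, hB₂_prod, hsum⟩ := exists_prefix_prod_le_sumDigits_eq hm hmax B₁
  have hB₂ : B₂ ∈ small := ⟨fun x hx => hB₁ x (hpre.subset hx), hB₂_prod⟩
  exact hsum ▸ Function.argminOn_le (sumDigits S) small hB₂

theorem stmt5 (S : Multiset ℕ) (hS : S ≠ 0) (m : ℕ) (hm : 0 < m)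
    (hmem : m ∈ S) (hmax : ∀ x ∈ S, x ≤ m)
    (B' : List ℕ) (r : ℕ) (hB : ∀ x ∈ B' ++ [r], 2 ≤ x)
    (hprod : m < (B' ++ [r]).prod) :
    sumDigits S (B' ++ [r]) = sumDigits S B' ∧
    ∃ B₀ : List ℕ, (∀ x ∈ B₀, 2 ≤ x) ∧ B₀.prod ≤ m ∧
      ∀ B₁ : List ℕ, (∀ x ∈ B₁, 2 ≤ x) → sumDigits S B₀ ≤ sumDigits S B₁ :=
  stmt5_general S m hm hmax B' r hprod
end

section
/- Let v > 0 be a natural number and B a finite mixed radix base with weights ⟨w₀,…,w_k⟩ (k = |B|). Then for every index 0 ≤ i ≤ k with v ≥ wᵢ, there exists an index j with i ≤ j ≤ k such that the j-th digit of v in base B is strictly positive. -/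
/-! The highest position `j ≤ |B|` whose weight is at most `v` carries the leading digit
`v / w_j`, which is positive; and `j ≥ i` because position `i` itself qualifies. -/

namespace weight

variable {B : List ℕ}

theorem pos (hB : ∀ x ∈ B, 0 < x) (i : ℕ) : 0 < weight B i :=
  List.prod_pos fun x hx => hB x (List.mem_of_mem_take hx)

theorem length_eq_prod : weight B B.length = B.prod := by
  simp [weight]

theorem succ {j : ℕ} (hj : j < B.length) : weight B (j + 1) = weight B j * B[j] :=
  List.prod_take_succ B j hj

end weight

theorem digit_of_lt_length_of_lt_weight_succ {B : List ℕ} {v j : ℕ} (hj : j < B.length)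
    (hv : v < weight B (j + 1)) : digit B v j = v / weight B j := by
  have hquot : v / weight B j < B[j] :=
    Nat.div_lt_of_lt_mul (weight.succ hj ▸ hv)
  rw [digit, if_pos hj, List.getD_eq_getElem _ _ hj, Nat.mod_eq_of_lt hquot]

theorem digit_length (B : List ℕ) (v : ℕ) : digit B v B.length = v / B.prod := by
  simp [digit]

theorem stmt10_general (v : ℕ) (B : List ℕ) (hB : ∀ x ∈ B, 2 ≤ x)
    (i : ℕ) (hi : i ≤ B.length) (hw : weight B i ≤ v) :
    ∃ j, i ≤ j ∧ j ≤ B.length ∧ 0 < digit B v j := by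
  let P : ℕ → Prop := fun j => weight B j ≤ v
  have hpos := weight.pos fun x hx => (hB x hx).trans_lt' two_pos
  obtain ⟨j, hj⟩ : ∃ j, Nat.findGreatest P B.length = j := ⟨_, rfl⟩
  have hjv : weight B j ≤ v := hj ▸ Nat.findGreatest_spec (P := P) hi hw
  have hjB : j ≤ B.length := hj ▸ Nat.findGreatest_le _
  refine ⟨j, hj ▸ Nat.le_findGreatest (P := P) hi hw, hjB, ?_⟩
  have hlead : digit B v j = v / weight B j := by
    rcases hjB.lt_or_eq with hlt | rfl
    · exact digit_of_lt_length_of_lt_weight_succ hlt <| not_le.mp <|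
        Nat.findGreatest_is_greatest (P := P) (hj ▸ Nat.lt_succ_self j) hlt
    · rw [digit_length, weight.length_eq_prod]
  exact hlead ▸ Nat.div_pos hjv (hpos j)

theorem stmt10 (v : ℕ) (hv : 0 < v) (B : List ℕ) (hB : ∀ x ∈ B, 2 ≤ x)
    (i : ℕ) (hi : i ≤ B.length) (hw : weight B i ≤ v) :
    ∃ j, i ≤ j ∧ j ≤ B.length ∧ 0 < digit B v j :=
  stmt10_general v B hB i hi hw
end

section
/- For the sum_digits cost function with partial cost ∂cost_S(B) = cost_S(B) − Σ msd(S_{(B)}) and heuristic h_S(B) = |{x ∈ S : x ≥ ∏B}|, the heuristic is admissible: for any bases B' ≻ B (B' extending B), cost_S(B') ≥ ∂cost_S(B') + h_S(B') ≥ ∂cost_S(B) + h_S(B). -/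
/-- The sum of most significant digits of the elements of `S` in base `B`. -/
def msdSum (S : Multiset ℕ) (B : List ℕ) : ℕ := (S.map (fun v => v / B.prod)).sum

/-- Partial cost for the `sum_digits` cost function: `cost_S(B) - Σ msd(S_(B))`. -/
def partialCost (S : Multiset ℕ) (B : List ℕ) : ℕ := sumDigits S B - msdSum S B

/-- Heuristic `h_S(B) = |{x ∈ S : x ≥ ∏B}|`. -/
def heur (S : Multiset ℕ) (B : List ℕ) : ℕ := (S.filter (fun x => B.prod ≤ x)).card

/-! Extending `B` by a radix `b` keeps the digits of `v` below position `|B|` and adds the digit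
`(v / ∏B) % b`. If `∏B ≤ v < ∏B * b`, so that `v` stops counting for the heuristic, this new digit
is `v / ∏B ≥ 1`. Hence the low digit sum plus the indicator of `∏B ≤ v` never decreases along
extensions, and summing over `S` gives the second inequality. The first holds because the most
significant digit `v / ∏B` is at least `1` whenever `∏B ≤ v`. -/

def lowDigitSum (B : List ℕ) (v : ℕ) : ℕ := ∑ i ∈ Finset.range B.length, digit B v i

lemma digitSum_eq_lowDigitSum_add (B : List ℕ) (v : ℕ) :
    digitSum B v = lowDigitSum B v + v / B.prod := by
  rw [digitSum, Finset.sum_range_succ, digit, if_neg (lt_irrefl _), lowDigitSum]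

lemma sumDigits_eq_sum_lowDigitSum_add_msdSum (S : Multiset ℕ) (B : List ℕ) :
    sumDigits S B = (S.map (lowDigitSum B)).sum + msdSum S B := by
  rw [sumDigits, msdSum, ← Multiset.sum_map_add]
  exact congrArg _ (Multiset.map_congr rfl fun v _ => digitSum_eq_lowDigitSum_add B v)

lemma partialCost_eq_sum_lowDigitSum (S : Multiset ℕ) (B : List ℕ) :
    partialCost S B = (S.map (lowDigitSum B)).sum := by
  rw [partialCost, sumDigits_eq_sum_lowDigitSum_add_msdSum, Nat.add_sub_cancel]

lemma heur_eq_sum_ite (S : Multiset ℕ) (B : List ℕ) :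
    heur S B = (S.map fun v => if B.prod ≤ v then 1 else 0).sum := by
  induction S using Multiset.induction with
  | empty => rfl
  | cons a S ih =>
    rw [heur] at ih ⊢
    by_cases h : B.prod ≤ a <;> simp [h, ih, add_comm]

lemma heur_le_msdSum (S : Multiset ℕ) {B : List ℕ} (hB : 0 < B.prod) :
    heur S B ≤ msdSum S B := by
  rw [heur_eq_sum_ite, msdSum]
  refine Multiset.sum_map_le_sum_map _ _ fun v _ => ?_
  split_ifs with h
  · exact (Nat.one_le_div_iff hB).mpr h
  · exact Nat.zero_le _

lemma digit_append_singleton_of_lt (B : List ℕ) (b v : ℕ) {i : ℕ} (hi : i < B.length) :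
    digit (B ++ [b]) v i = digit B v i := by
  unfold digit weight
  rw [if_pos hi, if_pos (by simp; omega), List.take_append_of_le_length hi.le,
    List.getD_append _ _ _ _ hi]

lemma lowDigitSum_append_singleton (B : List ℕ) (b v : ℕ) :
    lowDigitSum (B ++ [b]) v = lowDigitSum B v + v / B.prod % b := by
  rw [lowDigitSum, List.length_append, List.length_singleton, Finset.sum_range_succ]
  congr 1
  · exact Finset.sum_congr rfl fun i hi =>
      digit_append_singleton_of_lt B b v (Finset.mem_range.mp hi)
  · simp [digit, weight]

lemma lowDigitSum_add_ite_le_append_singleton (B : List ℕ) (b v : ℕ) :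
    lowDigitSum B v + (if B.prod ≤ v then 1 else 0) ≤
      lowDigitSum (B ++ [b]) v + (if (B ++ [b]).prod ≤ v then 1 else 0) := by
  rw [lowDigitSum_append_singleton, List.prod_append, List.prod_singleton]
  by_cases hlow : B.prod ≤ v
  · by_cases hhigh : B.prod * b ≤ v
    · simp only [hlow, hhigh, if_true]
      omega
    · have hB : 0 < B.prod := Nat.pos_of_ne_zero fun h => hhigh (by simp [h])
      have hlt : v / B.prod < b := (Nat.div_lt_iff_lt_mul hB).mpr (by linarith)
      have hpos : 1 ≤ v / B.prod := (Nat.one_le_div_iff hB).mpr hlow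
      simp only [hlow, hhigh, if_true, if_false, Nat.mod_eq_of_lt hlt]
      omega
  · simp only [hlow, if_false]
    omega

lemma lowDigitSum_add_ite_le_append (B L : List ℕ) (v : ℕ) :
    lowDigitSum B v + (if B.prod ≤ v then 1 else 0) ≤
      lowDigitSum (B ++ L) v + (if (B ++ L).prod ≤ v then 1 else 0) := by
  induction L using List.reverseRecOn with
  | nil => simp
  | append_singleton L b ih =>
    rw [← List.append_assoc]
    exact ih.trans (lowDigitSum_add_ite_le_append_singleton _ b v)

theorem stmt14_general (S : Multiset ℕ) (B B' : List ℕ) (hB' : ∀ x ∈ B', 2 ≤ x)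
    (hpre : B <+: B') :
    partialCost S B' + heur S B' ≤ sumDigits S B' ∧
    partialCost S B + heur S B ≤ partialCost S B' + heur S B' := by
  have hprod : 0 < B'.prod := List.prod_pos fun x hx => by have := hB' x hx; omega
  constructor
  · rw [sumDigits_eq_sum_lowDigitSum_add_msdSum, partialCost_eq_sum_lowDigitSum]
    exact Nat.add_le_add_left (heur_le_msdSum S hprod) _
  · obtain ⟨L, rfl⟩ := hpre
    simp only [partialCost_eq_sum_lowDigitSum, heur_eq_sum_ite, ← Multiset.sum_map_add]
    exact Multiset.sum_map_le_sum_map _ _ fun v _ => lowDigitSum_add_ite_le_append B L v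

theorem stmt14 (S : Multiset ℕ) (B B' : List ℕ) (hB' : ∀ x ∈ B', 2 ≤ x)
    (hpre : B <+: B') (hne : B ≠ B') :
    partialCost S B' + heur S B' ≤ sumDigits S B' ∧
    partialCost S B + heur S B ≤ partialCost S B' + heur S B' :=
  stmt14_general S B B' hB' hpre
end

section
/- There is a constant C such that for all m ≥ 4, Σ_{i=1}^{⌊m/2⌋} 1/(i · log₂(m/i)) ≤ C · log₂(log₂ m). -/
open Finset Real

private lemma aux_block_sum (k : ℕ) (s : Finset ℕ)
    (hs : s ⊆ Finset.Ico (2 ^ k) (2 ^ (k + 1))) :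
    ∑ i ∈ s, 1 / (i : ℝ) ≤ 1 := by
  calc ∑ i ∈ s, 1 / (i : ℝ)
      ≤ ∑ i ∈ (Finset.Ico (2 ^ k) (2 ^ (k + 1)) : Finset ℕ), 1 / (i : ℝ) := by
        apply Finset.sum_le_sum_of_subset_of_nonneg hs
        intro i _ _
        positivity
    _ ≤ ∑ _i ∈ (Finset.Ico (2 ^ k) (2 ^ (k + 1)) : Finset ℕ), 1 / (2 ^ k : ℝ) := by
        apply Finset.sum_le_sum
        intro i hi
        rw [Finset.mem_Ico] at hi
        have h1 : (0:ℝ) < 2 ^ k := by positivity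
        have h2 : (2 ^ k : ℝ) ≤ (i : ℝ) := by exact_mod_cast hi.1
        exact one_div_le_one_div_of_le h1 h2
    _ = 1 := by
        rw [Finset.sum_const, Nat.card_Ico, nsmul_eq_mul]
        have h3 : 2 ^ (k + 1) - 2 ^ k = 2 ^ k := by
          rw [pow_succ]; omega
        rw [h3]
        push_cast
        field_simp

theorem stmt17 : ∃ C : ℝ, ∀ m : ℕ, 4 ≤ m →
    ∑ i ∈ Finset.Icc 1 (m / 2), 1 / ((i : ℝ) * Real.logb 2 ((m : ℝ) / (i : ℝ))) ≤
      C * Real.logb 2 (Real.logb 2 (m : ℝ)) := by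
  refine ⟨4, fun m hm => ?_⟩
  set N := Nat.log 2 m with hNdef
  have hb : (1:ℝ) < 2 := one_lt_two
  have hN2 : 2 ≤ N := by
    rw [hNdef]
    exact (Nat.le_log_iff_pow_le (by norm_num) (by omega)).mpr (by norm_num; omega)
  have hmpos : (0:ℝ) < m := by positivity
  have hm_lb : (N : ℝ) ≤ Real.logb 2 (m : ℝ) := by
    have hp : (2:ℝ) ^ N ≤ (m : ℝ) := by exact_mod_cast Nat.pow_log_le_self 2 (by omega)
    calc (N : ℝ) = Real.logb 2 ((2:ℝ) ^ N) := by
          rw [Real.logb_pow, Real.logb_self_eq_one hb, mul_one]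
      _ ≤ Real.logb 2 (m : ℝ) := Real.logb_le_logb_of_le hb (by positivity) hp
  -- termwise bound
  have hterm : ∀ i ∈ Finset.Icc 1 (m / 2),
      1 / ((i : ℝ) * Real.logb 2 ((m : ℝ) / (i : ℝ))) ≤
      1 / (i : ℝ) * (1 / max 1 ((N - 1 - Nat.log 2 i : ℕ) : ℝ)) := by
    intro i hi
    rw [Finset.mem_Icc] at hi
    have hi1 : 1 ≤ i := hi.1
    have hipos : (0:ℝ) < i := by exact_mod_cast hi1
    have h2i : 2 * i ≤ m := by
      have := hi.2; omega
    have hdiv2 : (2:ℝ) ≤ (m : ℝ) / i := by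
      rw [le_div_iff₀ hipos]
      exact_mod_cast h2i
    set k := Nat.log 2 i with hk
    have hlb1 : (1:ℝ) ≤ Real.logb 2 ((m:ℝ) / i) := by
      calc (1:ℝ) = Real.logb 2 2 := (Real.logb_self_eq_one hb).symm
        _ ≤ Real.logb 2 ((m:ℝ) / i) := Real.logb_le_logb_of_le hb two_pos hdiv2
    have hlb2 : ((N - 1 - k : ℕ) : ℝ) ≤ Real.logb 2 ((m:ℝ) / i) := by
      rcases le_or_gt N (k + 1) with h | h
      · have h0 : N - 1 - k = 0 := by omega
        rw [h0]; push_cast; linarith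
      · have hcast : ((N - 1 - k : ℕ) : ℝ) = (N : ℝ) - ((k : ℝ) + 1) := by
          have h0 : N - 1 - k = N - (k + 1) := by omega
          rw [h0, Nat.cast_sub (by omega)]
          push_cast; ring
        have hi_ub : Real.logb 2 (i : ℝ) ≤ (k : ℝ) + 1 := by
          have hp : (i : ℝ) ≤ (2:ℝ) ^ (k + 1) := by
            exact_mod_cast (Nat.lt_pow_succ_log_self (by norm_num) i).le
          calc Real.logb 2 (i : ℝ) ≤ Real.logb 2 ((2:ℝ) ^ (k + 1)) :=
                Real.logb_le_logb_of_le hb hipos hp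
            _ = (k : ℝ) + 1 := by
                rw [Real.logb_pow, Real.logb_self_eq_one hb, mul_one]; push_cast; ring
        rw [hcast, Real.logb_div (ne_of_gt hmpos) (ne_of_gt hipos)]
        linarith
    have hmax : max 1 ((N - 1 - k : ℕ) : ℝ) ≤ Real.logb 2 ((m:ℝ) / i) :=
      max_le hlb1 hlb2
    have hcpos : (0:ℝ) < max 1 ((N - 1 - k : ℕ) : ℝ) := lt_max_of_lt_left one_pos
    have hrw : 1 / (i:ℝ) * (1 / max 1 ((N - 1 - k : ℕ) : ℝ)) =
        1 / ((i:ℝ) * max 1 ((N - 1 - k : ℕ) : ℝ)) := by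
      rw [div_mul_div_comm, one_mul]
    rw [hrw]
    exact one_div_le_one_div_of_le (by positivity)
      (mul_le_mul_of_nonneg_left hmax (le_of_lt hipos))
  -- fiberwise decomposition
  have hmaps : ∀ i ∈ Finset.Icc 1 (m / 2), Nat.log 2 i ∈ Finset.range N := by
    intro i hi
    rw [Finset.mem_Icc] at hi
    rw [Finset.mem_range]
    have h1 : Nat.log 2 i ≤ Nat.log 2 (m / 2) := Nat.log_mono_right hi.2
    have h2 : Nat.log 2 (m / 2) = N - 1 := by rw [Nat.log_div_base, hNdef]
    omega
  have hinner : ∀ k ∈ Finset.range N,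
      ∑ i ∈ (Finset.Icc 1 (m / 2)).filter (fun i => Nat.log 2 i = k),
        1 / (i : ℝ) * (1 / max 1 ((N - 1 - Nat.log 2 i : ℕ) : ℝ)) ≤
      1 / max 1 ((N - 1 - k : ℕ) : ℝ) := by
    intro k _
    have hcpos : (0:ℝ) < max 1 ((N - 1 - k : ℕ) : ℝ) := lt_max_of_lt_left one_pos
    have hcongr : ∑ i ∈ (Finset.Icc 1 (m / 2)).filter (fun i => Nat.log 2 i = k),
        1 / (i : ℝ) * (1 / max 1 ((N - 1 - Nat.log 2 i : ℕ) : ℝ)) =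
        (∑ i ∈ (Finset.Icc 1 (m / 2)).filter (fun i => Nat.log 2 i = k), 1 / (i : ℝ)) *
          (1 / max 1 ((N - 1 - k : ℕ) : ℝ)) := by
      rw [Finset.sum_mul]
      apply Finset.sum_congr rfl
      intro i hi
      rw [Finset.mem_filter] at hi
      rw [hi.2]
    rw [hcongr]
    have hsub : (Finset.Icc 1 (m / 2)).filter (fun i => Nat.log 2 i = k) ⊆
        Finset.Ico (2 ^ k) (2 ^ (k + 1)) := by
      intro i hi
      rw [Finset.mem_filter, Finset.mem_Icc] at hi
      rw [Finset.mem_Ico]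
      constructor
      · have := Nat.pow_log_le_self 2 (show i ≠ 0 by omega)
        rw [hi.2] at this; exact this
      · have := Nat.lt_pow_succ_log_self (show 1 < 2 by norm_num) i
        rw [hi.2] at this; exact this
    calc (∑ i ∈ (Finset.Icc 1 (m / 2)).filter (fun i => Nat.log 2 i = k), 1 / (i : ℝ)) *
          (1 / max 1 ((N - 1 - k : ℕ) : ℝ))
        ≤ 1 * (1 / max 1 ((N - 1 - k : ℕ) : ℝ)) := by
          apply mul_le_mul_of_nonneg_right (aux_block_sum k _ hsub) (by positivity)
      _ = 1 / max 1 ((N - 1 - k : ℕ) : ℝ) := one_mul _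
  -- harmonic bound
  have hNpos : (0:ℝ) < N := by positivity
  have hharm : ∑ j ∈ Finset.range N, 1 / max 1 ((j : ℕ) : ℝ) ≤ 2 + 2 * Real.log N := by
    calc ∑ j ∈ Finset.range N, 1 / max 1 ((j : ℕ) : ℝ)
        ≤ ∑ j ∈ Finset.range N, 2 / ((j : ℝ) + 1) := by
          apply Finset.sum_le_sum
          intro j _
          have h1 : ((j : ℝ) + 1) / 2 ≤ max 1 ((j : ℕ) : ℝ) := by
            rcases le_total ((j:ℕ):ℝ) 1 with h | h
            · calc ((j : ℝ) + 1) / 2 ≤ 1 := by linarith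
                _ ≤ max 1 ((j : ℕ) : ℝ) := le_max_left _ _
            · calc ((j : ℝ) + 1) / 2 ≤ (j : ℝ) := by linarith
                _ ≤ max 1 ((j : ℕ) : ℝ) := le_max_right _ _
          have h2 : (0:ℝ) < ((j : ℝ) + 1) / 2 := by positivity
          calc 1 / max 1 ((j : ℕ) : ℝ) ≤ 1 / (((j : ℝ) + 1) / 2) :=
                one_div_le_one_div_of_le h2 h1
            _ = 2 / ((j : ℝ) + 1) := by rw [one_div_div]
      _ = 2 * ∑ j ∈ Finset.range N, 1 / ((j : ℝ) + 1) := by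
          rw [Finset.mul_sum]
          apply Finset.sum_congr rfl
          intro j _
          ring
      _ ≤ 2 * (1 + Real.log N) := by
          have heq : ∑ j ∈ Finset.range N, 1 / ((j : ℝ) + 1) = ((harmonic N : ℚ) : ℝ) := by
            rw [harmonic_eq_sum_Icc]
            push_cast
            rw [← Finset.Ico_add_one_right_eq_Icc, Finset.sum_Ico_eq_sum_range]
            apply Finset.sum_congr (by norm_num)
            intro j _
            push_cast
            rw [one_div, add_comm]
          rw [heq]
          have := harmonic_le_one_add_log N
          linarith
      _ = 2 + 2 * Real.log N := by ring
  -- final comparison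
  have hL1 : (2:ℝ) ≤ Real.logb 2 (m : ℝ) := by
    calc (2:ℝ) ≤ (N : ℝ) := by exact_mod_cast hN2
      _ ≤ Real.logb 2 (m : ℝ) := hm_lb
  have hL2 : (1:ℝ) ≤ Real.logb 2 (Real.logb 2 (m : ℝ)) := by
    calc (1:ℝ) = Real.logb 2 2 := (Real.logb_self_eq_one hb).symm
      _ ≤ Real.logb 2 (Real.logb 2 (m : ℝ)) := Real.logb_le_logb_of_le hb two_pos hL1
  have hlogN : Real.log N ≤ Real.logb 2 (Real.logb 2 (m : ℝ)) := by
    have h1 : Real.log (N : ℝ) ≤ Real.logb 2 (N : ℝ) := by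
      rw [Real.logb, le_div_iff₀ (Real.log_pos one_lt_two)]
      have hlN : 0 ≤ Real.log (N : ℝ) := Real.log_nonneg (by exact_mod_cast Nat.one_le_iff_ne_zero.mpr (by omega))
      nlinarith [Real.log_two_lt_d9]
    have h2 : Real.logb 2 (N : ℝ) ≤ Real.logb 2 (Real.logb 2 (m : ℝ)) :=
      Real.logb_le_logb_of_le hb hNpos hm_lb
    linarith
  calc ∑ i ∈ Finset.Icc 1 (m / 2), 1 / ((i : ℝ) * Real.logb 2 ((m : ℝ) / (i : ℝ)))
      ≤ ∑ i ∈ Finset.Icc 1 (m / 2),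
          1 / (i : ℝ) * (1 / max 1 ((N - 1 - Nat.log 2 i : ℕ) : ℝ)) :=
        Finset.sum_le_sum hterm
    _ = ∑ k ∈ Finset.range N, ∑ i ∈ (Finset.Icc 1 (m / 2)).filter (fun i => Nat.log 2 i = k),
          1 / (i : ℝ) * (1 / max 1 ((N - 1 - Nat.log 2 i : ℕ) : ℝ)) :=
        (Finset.sum_fiberwise_of_maps_to hmaps _).symm
    _ ≤ ∑ k ∈ Finset.range N, 1 / max 1 ((N - 1 - k : ℕ) : ℝ) :=
        Finset.sum_le_sum hinner
    _ = ∑ j ∈ Finset.range N, 1 / max 1 ((j : ℕ) : ℝ) :=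
        Finset.sum_range_reflect (fun j => 1 / max 1 ((j : ℕ) : ℝ)) N
    _ ≤ 2 + 2 * Real.log N := hharm
    _ ≤ 4 * Real.logb 2 (Real.logb 2 (m : ℝ)) := by linarith
end

section
/- Let S be a finite multiset of naturals, B a base of length k, and suppose the base B' = B extended by one element p is formed. Then the sums and carries of S in B' agree with those of S in B at all positions j ≤ k−1, and consequently sum_carry(S_{(B')}) can be computed from sum_carry(S_{(B)}) by recomputing only the contributions of the last two digit columns. -/
/-- Column sum `s_j`: the sum of the `j`-th digits of the elements of `S` in base `B`. -/
def colSum (S : Multiset ℕ) (B : List ℕ) (j : ℕ) : ℕ :=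
  (S.map (fun v => digit B v j)).sum

/-- The carries: `c 0 = 0` and `c (j+1) = (s j + c j) div B(j)`. -/
def carry (S : Multiset ℕ) (B : List ℕ) : ℕ → ℕ
  | 0 => 0
  | j + 1 => (colSum S B j + carry S B j) / B.getD j 1

/-- `sum_carry(S_(B)) = Σ_{j=0}^{k} (s_j + c_j)`. -/
def sumCarry (S : Multiset ℕ) (B : List ℕ) : ℕ :=
  ∑ j ∈ Finset.range (B.length + 1), (colSum S B j + carry S B j)

/-! Extending a base `B` by further radices `C` changes neither the low digits nor the carries
into positions `j ≤ B.length`, since both only read the radices `B(0), …, B(j-1)` (and `B(j)`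
for digits). -/

section BaseAppend

variable (B C : List ℕ)

theorem weight_append_of_le {j : ℕ} (hj : j ≤ B.length) : weight (B ++ C) j = weight B j := by
  rw [weight, weight, List.take_append_of_le_length hj]

theorem digit_append_of_lt (v : ℕ) {j : ℕ} (hj : j < B.length) :
    digit (B ++ C) v j = digit B v j := by
  have hj' : j < (B ++ C).length := by simp; omega
  rw [digit, digit, if_pos hj, if_pos hj', weight_append_of_le B C hj.le,
    List.getD_append B C 1 j hj]

variable (S : Multiset ℕ)

theorem colSum_append_of_lt {j : ℕ} (hj : j < B.length) :
    colSum S (B ++ C) j = colSum S B j := by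
  simp only [colSum, digit_append_of_lt B C _ hj]

theorem carry_append_of_le : ∀ {j : ℕ}, j ≤ B.length → carry S (B ++ C) j = carry S B j
  | 0, _ => rfl
  | j + 1, hj => by
    have hj' : j < B.length := hj
    rw [carry, carry, colSum_append_of_lt B C S hj', carry_append_of_le hj'.le,
      List.getD_append B C 1 j hj']

end BaseAppend

theorem stmt19_general (S : Multiset ℕ) (B : List ℕ)
    (p : ℕ) :
    (∀ j < B.length,
        colSum S (B ++ [p]) j = colSum S B j ∧ carry S (B ++ [p]) j = carry S B j) ∧
    sumCarry S (B ++ [p]) =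
      (∑ j ∈ Finset.range B.length, (colSum S B j + carry S B j)) +
        (colSum S (B ++ [p]) B.length + carry S (B ++ [p]) B.length) +
        (colSum S (B ++ [p]) (B.length + 1) + carry S (B ++ [p]) (B.length + 1)) := by
  have prefix_eq : ∀ j < B.length,
      colSum S (B ++ [p]) j = colSum S B j ∧ carry S (B ++ [p]) j = carry S B j :=
    fun j hj => ⟨colSum_append_of_lt B [p] S hj, carry_append_of_le B [p] S hj.le⟩
  refine ⟨prefix_eq, ?_⟩
  rw [sumCarry, List.length_append, List.length_singleton, Finset.sum_range_succ,
    Finset.sum_range_succ]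
  congr 2
  refine Finset.sum_congr rfl fun j hj => ?_
  obtain ⟨hcol, hcarry⟩ := prefix_eq j (Finset.mem_range.mp hj)
  rw [hcol, hcarry]

theorem stmt19 (S : Multiset ℕ) (B : List ℕ) (hB : ∀ x ∈ B, 2 ≤ x)
    (p : ℕ) (hp : 2 ≤ p) :
    (∀ j < B.length,
        colSum S (B ++ [p]) j = colSum S B j ∧ carry S (B ++ [p]) j = carry S B j) ∧
    sumCarry S (B ++ [p]) =
      (∑ j ∈ Finset.range B.length, (colSum S B j + carry S B j)) +
        (colSum S (B ++ [p]) B.length + carry S (B ++ [p]) B.length) +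
        (colSum S (B ++ [p]) (B.length + 1) + carry S (B ++ [p]) (B.length + 1)) :=
  stmt19_general S B p
end
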